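/- arXiv:2107.03929 — 3 statements merged into one kernel-verified Lean document; each statement's English description precedes it below -/
import Mathlib

section
/- Let $N\in\mathbb{N}^*$, $a\in[0,1]$, and let $(v_j)_{j\ge 1}$ be complex numbers with $\sum_{j\ge 1} j^2 |v_j|^2 < \infty$. Then $\sum_{k=1}^{N} 2\sin^2(k\pi a)\,\Big|\sum_{j=N+1}^{\infty} v_j\,\sqrt{2}\sin(j\pi a)\Big|^2 \;\le\; \frac{4}{\pi^2}\,\sum_{j=N+1}^{\infty} j^2\pi^2\,|v_j|^2$. (Equivalently, the operator $P^N A_t (I-P^N)$, where $A_t=-\partial_{xx}^2+\eta\,\delta_{x=a}$ and $P^N$ is the projection onto the span of $\sqrt{2}\sin(k\pi x)$, $k\le N$, satisfies $\|P^N A_t (I-P^N) v\|_{L^2} \le \tfrac{2}{\pi}\,\eta\,\|(I-P^N)v\|_{H^1_0}$.) -/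
open Finset

lemma tele (N : ℕ) (hN : 0 < N) : ∀ M, N ≤ M →
    ∑ j ∈ Finset.Ioc N M, ((j:ℝ)^2)⁻¹ ≤ (N:ℝ)⁻¹ - (M:ℝ)⁻¹ := by
  intro M
  induction M with
  | zero => intro h; omega
  | succ M ih =>
    intro h
    rcases Nat.lt_or_ge N (M+1) with h1 | h1
    · have hNM : N ≤ M := Nat.lt_succ_iff.mp h1
      rw [Finset.sum_Ioc_succ_top hNM]
      have hM : 0 < M := lt_of_lt_of_le hN hNM
      have hM' : (0:ℝ) < M := by exact_mod_cast hM
      have key : (((M+1:ℕ):ℝ)^2)⁻¹ ≤ (M:ℝ)⁻¹ - ((M+1:ℕ):ℝ)⁻¹ := by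
        push_cast
        rw [inv_sub_inv (ne_of_gt hM') (by positivity)]
        rw [show (M:ℝ) + 1 - M = 1 by ring]
        rw [inv_le_iff_one_le_mul₀ (by positivity)]
        rw [div_mul_eq_mul_div, le_div_iff₀ (by positivity)]
        nlinarith
      have := ih hNM
      push_cast at key ⊢
      linarith
    · have : N = M+1 := le_antisymm h h1
      subst this
      simp

lemma inv_sq_tail (N : ℕ) (hN : 0 < N) :
    ∑' j : {j : ℕ // N < j}, (((j:ℕ):ℝ)^2)⁻¹ ≤ (N:ℝ)⁻¹ := by
  have hsum : Summable (fun j : ℕ => ((j:ℝ)^2)⁻¹) := by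
    simpa using Real.summable_one_div_nat_pow.mpr (by norm_num : 1 < 2)
  refine Summable.tsum_le_of_sum_le (hsum.subtype _) ?_
  intro s
  classical
  have hinj : ∀ x ∈ s, ∀ y ∈ s, (x:ℕ) = (y:ℕ) → x = y := fun x _ y _ h => Subtype.ext h
  rw [← Finset.sum_image (g := (Subtype.val : {j : ℕ // N < j} → ℕ))
    (f := fun j : ℕ => ((j:ℝ)^2)⁻¹) hinj]
  set t : Finset ℕ := s.image Subtype.val with ht
  have hsub : t ⊆ Finset.Ioc N (max N (t.sup id)) := by
    intro j hj
    obtain ⟨x, hx, rfl⟩ := Finset.mem_image.mp hj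
    exact Finset.mem_Ioc.mpr ⟨x.2, le_max_of_le_right (Finset.le_sup (f := id) hj)⟩
  calc ∑ j ∈ t, ((j:ℝ)^2)⁻¹ ≤ ∑ j ∈ Finset.Ioc N (max N (t.sup id)), ((j:ℝ)^2)⁻¹ :=
        Finset.sum_le_sum_of_subset_of_nonneg hsub (by intros; positivity)
    _ ≤ (N:ℝ)⁻¹ - ((max N (t.sup id) : ℕ):ℝ)⁻¹ := tele N hN _ (le_max_left _ _)
    _ ≤ (N:ℝ)⁻¹ := by
        have : (0:ℝ) ≤ ((max N (t.sup id) : ℕ):ℝ)⁻¹ := by positivity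
        linarith

lemma tsum_CS {ι : Type*} (f g : ι → ℝ) (hf0 : ∀ i, 0 ≤ f i) (hg0 : ∀ i, 0 ≤ g i)
    (hf : Summable (fun i => f i ^ 2)) (hg : Summable (fun i => g i ^ 2)) :
    ∑' i, f i * g i ≤ Real.sqrt (∑' i, f i ^ 2) * Real.sqrt (∑' i, g i ^ 2) := by
  have hfg : Summable (fun i => f i * g i) := by
    refine Summable.of_nonneg_of_le (fun i => mul_nonneg (hf0 i) (hg0 i))
      (fun i => ?_) ((hf.add hg).div_const 2)
    nlinarith [sq_nonneg (f i - g i)]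
  refine Summable.tsum_le_of_sum_le hfg fun s => ?_
  calc ∑ i ∈ s, f i * g i
      ≤ Real.sqrt (∑ i ∈ s, f i ^ 2) * Real.sqrt (∑ i ∈ s, g i ^ 2) :=
        Real.sum_mul_le_sqrt_mul_sqrt s f g
    _ ≤ Real.sqrt (∑' i, f i ^ 2) * Real.sqrt (∑' i, g i ^ 2) := by
        apply mul_le_mul (Real.sqrt_le_sqrt (Summable.sum_le_tsum s (fun i _ => sq_nonneg _) hf))
          (Real.sqrt_le_sqrt (Summable.sum_le_tsum s (fun i _ => sq_nonneg _) hg))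
          (Real.sqrt_nonneg _) (Real.sqrt_nonneg _)


/-- for `(v_j)` with `∑ j² |v_j|² < ∞`,
`∑_{k=1}^N 2 sin²(kπa) |∑_{j>N} v_j √2 sin(jπa)|² ≤ (4/π²) ∑_{j>N} j²π² |v_j|²`;
i.e. `‖P^N A_t (I - P^N) v‖_{L²} ≤ (2/π) η ‖(I-P^N)v‖_{H¹₀}` (with `η = 1` factored out). -/
theorem stmt_3 (N : ℕ) (hN : 0 < N) (a : ℝ) (ha : a ∈ Set.Icc (0:ℝ) 1)
    (v : ℕ → ℂ) (hv : Summable fun j : ℕ => (j : ℝ) ^ 2 * ‖v j‖ ^ 2) :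
    ∑ k ∈ Finset.Icc 1 N, 2 * Real.sin (k * Real.pi * a) ^ 2 *
        ‖∑' j : {j : ℕ // N < j}, v (j : ℕ) *
          ((Real.sqrt 2 : ℂ) * (Real.sin ((j : ℕ) * Real.pi * a) : ℂ))‖ ^ 2
      ≤ 4 / Real.pi ^ 2 *
        ∑' j : {j : ℕ // N < j}, ((j : ℕ) : ℝ) ^ 2 * Real.pi ^ 2 * ‖v (j : ℕ)‖ ^ 2 := by
  set S := {j : ℕ // N < j}
  set f : S → ℝ := fun j => ((j:ℕ):ℝ) * ‖v (j:ℕ)‖ with hfdef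
  set g : S → ℝ := fun j => Real.sqrt 2 / ((j:ℕ):ℝ) with hgdef
  have hf0 : ∀ j : S, 0 ≤ f j := fun j => mul_nonneg (by positivity) (norm_nonneg _)
  have hg0 : ∀ j : S, 0 ≤ g j := fun j => by positivity
  have hjpos : ∀ j : S, (0:ℝ) < ((j:ℕ):ℝ) := fun j => by
    exact_mod_cast hN.trans j.2
  have hf2 : Summable (fun j : S => f j ^ 2) := by
    have := hv.subtype {j : ℕ | N < j}
    refine this.congr fun j => ?_
    simp [hfdef, mul_pow]
  have hg2 : Summable (fun j : S => g j ^ 2) := by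
    have hsum : Summable (fun j : ℕ => ((j:ℝ)^2)⁻¹) := by
      simpa using Real.summable_one_div_nat_pow.mpr (by norm_num : 1 < 2)
    have := (hsum.subtype {j : ℕ | N < j}).mul_left 2
    refine this.congr fun j => ?_
    simp only [Function.comp_apply, hgdef]
    rw [div_pow, Real.sq_sqrt (by norm_num : (0:ℝ) ≤ 2), div_eq_mul_inv]
  set A := ∑' j : S, f j ^ 2 with hA
  set B := ∑' j : S, g j ^ 2 with hB
  have hA0 : 0 ≤ A := tsum_nonneg fun j => sq_nonneg _
  -- B ≤ 2 / N
  have hBle : B ≤ 2 / N := by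
    have h1 : B = 2 * ∑' j : S, (((j:ℕ):ℝ)^2)⁻¹ := by
      rw [hB, ← tsum_mul_left]
      congr 1; funext j
      rw [hgdef, div_pow, Real.sq_sqrt (by norm_num : (0:ℝ) ≤ 2), div_eq_mul_inv]
    rw [h1, div_eq_mul_inv]
    have := inv_sq_tail N hN
    nlinarith
  -- bound on the inner tsum
  set T := ∑' j : S, v (j:ℕ) * ((Real.sqrt 2 : ℂ) * (Real.sin (((j:ℕ):ℝ) * Real.pi * a) : ℂ)) with hT
  have hterm : ∀ j : S, ‖v (j:ℕ) * ((Real.sqrt 2 : ℂ) * (Real.sin (((j:ℕ):ℝ) * Real.pi * a) : ℂ))‖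
      ≤ f j * g j := by
    intro j
    have h2 : (0:ℝ) ≤ Real.sqrt 2 := Real.sqrt_nonneg 2
    rw [norm_mul, norm_mul]
    have hs : ‖(Real.sin (((j:ℕ):ℝ) * Real.pi * a) : ℂ)‖ ≤ 1 := by
      rw [Complex.norm_real]
      exact abs_le.mpr ⟨Real.neg_one_le_sin _, Real.sin_le_one _⟩
    have hsq : ‖(Real.sqrt 2 : ℂ)‖ = Real.sqrt 2 := by
      rw [Complex.norm_real, Real.norm_eq_abs, abs_of_nonneg h2]
    calc ‖v (j:ℕ)‖ * (‖(Real.sqrt 2 : ℂ)‖ * ‖(Real.sin (((j:ℕ):ℝ) * Real.pi * a) : ℂ)‖)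
        ≤ ‖v (j:ℕ)‖ * (Real.sqrt 2 * 1) := by
          rw [hsq]
          exact mul_le_mul_of_nonneg_left (mul_le_mul_of_nonneg_left hs h2) (norm_nonneg _)
      _ = f j * g j := by
          rw [hfdef, hgdef]
          field_simp [(hjpos j).ne']
  have hfg : Summable (fun j : S => f j * g j) := by
    refine Summable.of_nonneg_of_le (fun j => mul_nonneg (hf0 j) (hg0 j))
      (fun j => ?_) ((hf2.add hg2).div_const 2)
    nlinarith [sq_nonneg (f j - g j)]
  have hnormsum : Summable (fun j : S =>
      ‖v (j:ℕ) * ((Real.sqrt 2 : ℂ) * (Real.sin (((j:ℕ):ℝ) * Real.pi * a) : ℂ))‖) :=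
    Summable.of_nonneg_of_le (fun j => norm_nonneg _) hterm hfg
  have hTle : ‖T‖ ≤ ∑' j : S, f j * g j := by
    calc ‖T‖ ≤ ∑' j : S, ‖v (j:ℕ) * ((Real.sqrt 2 : ℂ) * (Real.sin (((j:ℕ):ℝ) * Real.pi * a) : ℂ))‖ :=
          norm_tsum_le_tsum_norm hnormsum
      _ ≤ ∑' j : S, f j * g j := Summable.tsum_le_tsum hterm hnormsum hfg
  have hCS : ∑' j : S, f j * g j ≤ Real.sqrt A * Real.sqrt B := tsum_CS f g hf0 hg0 hf2 hg2
  have hT2 : ‖T‖ ^ 2 ≤ A * B := by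
    calc ‖T‖ ^ 2 ≤ (Real.sqrt A * Real.sqrt B) ^ 2 := by
          apply pow_le_pow_left₀ (norm_nonneg _) (le_trans hTle hCS)
      _ = A * B := by
          rw [mul_pow, Real.sq_sqrt hA0, Real.sq_sqrt (tsum_nonneg fun j => sq_nonneg _)]
  -- sum of sines bound
  have hsin : ∑ k ∈ Finset.Icc 1 N, 2 * Real.sin ((k:ℝ) * Real.pi * a) ^ 2 ≤ 2 * (N:ℝ) := by
    calc ∑ k ∈ Finset.Icc 1 N, 2 * Real.sin ((k:ℝ) * Real.pi * a) ^ 2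
        ≤ ∑ k ∈ Finset.Icc 1 N, 2 := by
          refine Finset.sum_le_sum fun k _ => ?_
          nlinarith [Real.neg_one_le_sin ((k:ℝ) * Real.pi * a), Real.sin_le_one ((k:ℝ) * Real.pi * a)]
      _ = 2 * (N:ℝ) := by
          rw [Finset.sum_const, Nat.card_Icc]
          simp [mul_comm]
  -- RHS equals 4 * A
  have hRHS : 4 / Real.pi ^ 2 *
      ∑' j : S, ((j:ℕ):ℝ) ^ 2 * Real.pi ^ 2 * ‖v (j:ℕ)‖ ^ 2 = 4 * A := by
    have h1 : ∑' j : S, ((j:ℕ):ℝ) ^ 2 * Real.pi ^ 2 * ‖v (j:ℕ)‖ ^ 2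
        = Real.pi ^ 2 * A := by
      rw [hA, ← tsum_mul_left]
      congr 1; funext j
      rw [hfdef]; ring
    rw [h1]
    have hpi : Real.pi ^ 2 ≠ 0 := by positivity
    field_simp
  rw [hRHS, ← Finset.sum_mul]
  have hN' : (0:ℝ) < N := by exact_mod_cast hN
  calc (∑ k ∈ Finset.Icc 1 N, 2 * Real.sin ((k:ℝ) * Real.pi * a) ^ 2) * ‖T‖ ^ 2
      ≤ (2 * N) * (A * (2 / N)) := by
        apply mul_le_mul hsin (le_trans hT2 (mul_le_mul_of_nonneg_left hBle hA0))
          (sq_nonneg _) (by positivity)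
    _ = 4 * A := by field_simp; ring
end

section
/- Assume the eigenfunction setup with eigenvalue $\lambda$ and let $c_j=\int_0^1 \varphi(x)\,\sqrt{2}\sin(j\pi x)\,dx$ for $j\ge 1$. Then for every $j\ge 1$ with $j^2\pi^2\ne\lambda$, $|c_j| \le \sqrt{2}\,\dfrac{\eta\,|\varphi(a)|}{|j^2\pi^2-\lambda|}$. -/
open intervalIntegral MeasureTheory Set

structure EigenfunctionSetup (a η lam : ℝ) (φ d1 d2 e1 e2 : ℝ → ℂ) : Prop where
  ha : a ∈ Set.Ioo (0:ℝ) 1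
  hη : 0 ≤ η
  φ_cont : ContinuousOn φ (Set.Icc 0 1)
  bc0 : φ 0 = 0
  bc1 : φ 1 = 0
  derivL : ∀ x ∈ Set.Icc (0:ℝ) a, HasDerivWithinAt φ (d1 x) (Set.Icc 0 a) x ∧
    HasDerivWithinAt d1 (d2 x) (Set.Icc 0 a) x
  d2_cont : ContinuousOn d2 (Set.Icc 0 a)
  derivR : ∀ x ∈ Set.Icc a (1:ℝ), HasDerivWithinAt φ (e1 x) (Set.Icc a 1) x ∧
    HasDerivWithinAt e1 (e2 x) (Set.Icc a 1) x
  e2_cont : ContinuousOn e2 (Set.Icc a 1)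
  odeL : ∀ x ∈ Set.Ioo (0:ℝ) a, -d2 x = (lam : ℂ) * φ x
  odeR : ∀ x ∈ Set.Ioo a (1:ℝ), -e2 x = (lam : ℂ) * φ x
  jump : e1 a - d1 a = (η : ℂ) * φ a

lemma sin_hasDerivAt (k x : ℝ) :
    HasDerivAt (fun x => ((Real.sin (k*x) : ℂ))) ((k:ℂ) * (Real.cos (k*x) : ℂ)) x := by
  have h1 : HasDerivAt (fun x : ℝ => Real.sin (k*x)) (Real.cos (k*x) * k) x :=
    (Real.hasDerivAt_sin (k*x)).comp x (by simpa using (hasDerivAt_id x).const_mul k)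
  have := h1.ofReal_comp
  convert this using 1
  push_cast
  ring

lemma cos_hasDerivAt (k x : ℝ) :
    HasDerivAt (fun x => ((Real.cos (k*x) : ℂ))) (-(k:ℂ) * (Real.sin (k*x) : ℂ)) x := by
  have h1 : HasDerivAt (fun x : ℝ => Real.cos (k*x)) (-Real.sin (k*x) * k) x :=
    (Real.hasDerivAt_cos (k*x)).comp x (by simpa using (hasDerivAt_id x).const_mul k)
  have := h1.ofReal_comp
  convert this using 1
  push_cast
  ring

lemma piece (p q k lam : ℝ) (hpq : p ≤ q) (f f1 f2 : ℝ → ℂ)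
    (hf : ∀ x ∈ Set.Icc p q, HasDerivWithinAt f (f1 x) (Set.Icc p q) x ∧
      HasDerivWithinAt f1 (f2 x) (Set.Icc p q) x)
    (hode : ∀ x ∈ Set.Ioo p q, -f2 x = (lam:ℂ) * f x)
    (hfc : ContinuousOn f (Set.Icc p q)) :
    ∫ x in p..q, ((lam:ℂ) - (k:ℂ)^2) * (f x * (Real.sin (k*x) : ℂ))
      = (f q * ((k:ℂ) * (Real.cos (k*q):ℂ)) - f1 q * (Real.sin (k*q):ℂ))
        - (f p * ((k:ℂ) * (Real.cos (k*p):ℂ)) - f1 p * (Real.sin (k*p):ℂ)) := by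
  set S : ℝ → ℂ := fun x => ((Real.sin (k*x) : ℂ)) with hS
  set C : ℝ → ℂ := fun x => ((Real.cos (k*x) : ℂ)) with hC
  set W : ℝ → ℂ := fun x => f x * ((k:ℂ) * C x) - f1 x * S x with hW
  have hWd : ∀ x ∈ Set.Icc p q, HasDerivWithinAt W
      (f x * (-(k:ℂ)^2 * S x) - f2 x * S x) (Set.Icc p q) x := by
    intro x hx
    have h1 : HasDerivWithinAt (fun x => (k:ℂ) * C x) (-(k:ℂ)^2 * S x) (Set.Icc p q) x := by
      have := ((cos_hasDerivAt k x).const_mul (k:ℂ)).hasDerivWithinAt (s := Set.Icc p q)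
      convert this using 1
      · rfl
      ring
    have h2 := ((hf x hx).1.mul h1).sub ((hf x hx).2.mul (sin_hasDerivAt k x).hasDerivWithinAt)
    convert h2 using 1
    · rfl
    · rfl
    ring
  have hcontW : ContinuousOn W (Set.Icc p q) := fun x hx => (hWd x hx).continuousWithinAt
  have hSc : Continuous S := Complex.continuous_ofReal.comp (Real.continuous_sin.comp (by continuity))
  have hint : IntervalIntegrable (fun x => ((lam:ℂ) - (k:ℂ)^2) * (f x * S x)) volume p q := by
    apply ContinuousOn.intervalIntegrable
    rw [Set.uIcc_of_le hpq]
    exact (continuousOn_const.mul (hfc.mul hSc.continuousOn))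
  have key := intervalIntegral.integral_eq_sub_of_hasDeriv_right_of_le hpq hcontW
    (f' := fun x => ((lam:ℂ) - (k:ℂ)^2) * (f x * S x))
    (fun x hx => by
      have hmem : Set.Icc p q ∈ nhds x := Icc_mem_nhds hx.1 hx.2
      have := ((hWd x (Set.Ioo_subset_Icc_self hx)).hasDerivAt hmem).hasDerivWithinAt
        (s := Set.Ioi x)
      convert this using 1
      have := hode x hx
      have hf2 : f2 x = -((lam:ℂ) * f x) := by linear_combination -this
      rw [hf2]; ring)
    hint
  simpa only [hW, hS, hC] using key

/-- the Fourier coefficients `c_j = ∫₀¹ φ(x) √2 sin(jπx) dx` of an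
eigenfunction with eigenvalue `λ` satisfy `|c_j| ≤ √2 η |φ(a)| / |j²π² - λ|`
whenever `j²π² ≠ λ`. -/
theorem stmt_4 (a η lam : ℝ) (φ d1 d2 e1 e2 : ℝ → ℂ)
    (hsetup : EigenfunctionSetup a η lam φ d1 d2 e1 e2)
    (j : ℕ) (hj : 1 ≤ j) (hne : (j : ℝ) ^ 2 * Real.pi ^ 2 ≠ lam) :
    ‖∫ x in (0:ℝ)..1, φ x * ((Real.sqrt 2 : ℂ) * (Real.sin (j * Real.pi * x) : ℂ))‖
      ≤ Real.sqrt 2 * (η * ‖φ a‖) / |(j : ℝ) ^ 2 * Real.pi ^ 2 - lam| := by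
  obtain ⟨ha, hη, φc, bc0, bc1, dL, d2c, dR, e2c, odeL, odeR, jmp⟩ := hsetup
  set k : ℝ := (j:ℝ) * Real.pi with hk
  have hk2 : k^2 = (j:ℝ)^2 * Real.pi^2 := by rw [hk]; ring
  have ha0 : (0:ℝ) ≤ a := ha.1.le
  have ha1 : a ≤ 1 := ha.2.le
  -- left piece
  have hL := piece 0 a k lam ha0 φ d1 d2 dL odeL
    (φc.mono (Set.Icc_subset_Icc le_rfl ha1))
  have hR := piece a 1 k lam ha1 φ e1 e2 dR odeR
    (φc.mono (Set.Icc_subset_Icc ha0 le_rfl))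
  have hS0 : (Real.sin (k*0) : ℂ) = 0 := by norm_num
  have hS1 : (Real.sin (k*1) : ℂ) = 0 := by
    rw [mul_one, hk, Real.sin_nat_mul_pi]; norm_num
  rw [bc0, hS0] at hL
  rw [bc1, hS1] at hR
  -- integrability for joining
  have hSc : Continuous fun x => ((Real.sin (k*x) : ℂ)) :=
    Complex.continuous_ofReal.comp (Real.continuous_sin.comp (by continuity))
  have hintL : IntervalIntegrable
      (fun x => ((lam:ℂ) - (k:ℂ)^2) * (φ x * (Real.sin (k*x) : ℂ))) volume 0 a := by
    apply ContinuousOn.intervalIntegrable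
    rw [Set.uIcc_of_le ha0]
    exact continuousOn_const.mul (((φc.mono (Set.Icc_subset_Icc le_rfl ha1))).mul hSc.continuousOn)
  have hintR : IntervalIntegrable
      (fun x => ((lam:ℂ) - (k:ℂ)^2) * (φ x * (Real.sin (k*x) : ℂ))) volume a 1 := by
    apply ContinuousOn.intervalIntegrable
    rw [Set.uIcc_of_le ha1]
    exact continuousOn_const.mul (((φc.mono (Set.Icc_subset_Icc ha0 le_rfl))).mul hSc.continuousOn)
  have hsum := intervalIntegral.integral_add_adjacent_intervals hintL hintR
  rw [hL, hR] at hsum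
  -- hsum : ∫ 0..1 (lam - k²)(φ S) = stuff
  have hkey : ((lam:ℂ) - (k:ℂ)^2) * (∫ x in (0:ℝ)..1, φ x * (Real.sin (k*x) : ℂ))
      = (η:ℂ) * φ a * (Real.sin (k*a) : ℂ) := by
    rw [← intervalIntegral.integral_const_mul, ← hsum, ← jmp]
    ring
  have hc : ((lam:ℂ) - (k:ℂ)^2) ≠ 0 := by
    intro h
    apply hne
    have : (lam:ℂ) = ((k^2 : ℝ) : ℂ) := by push_cast; linear_combination h
    have := Complex.ofReal_injective this
    rw [← hk2, this]
  have hI : (∫ x in (0:ℝ)..1, φ x * (Real.sin (k*x) : ℂ))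
      = (η:ℂ) * φ a * (Real.sin (k*a) : ℂ) / ((lam:ℂ) - (k:ℂ)^2) := by
    field_simp at hkey ⊢
    linear_combination hkey
  have heq : ∀ x : ℝ, φ x * ((Real.sqrt 2 : ℂ) * (Real.sin (j * Real.pi * x) : ℂ))
      = (Real.sqrt 2 : ℂ) * (φ x * (Real.sin (k*x) : ℂ)) := by
    intro x; rw [hk]; ring
  calc ‖∫ x in (0:ℝ)..1, φ x * ((Real.sqrt 2 : ℂ) * (Real.sin (j * Real.pi * x) : ℂ))‖
      = ‖(Real.sqrt 2 : ℂ) * ∫ x in (0:ℝ)..1, φ x * (Real.sin (k*x) : ℂ)‖ := by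
        rw [← intervalIntegral.integral_const_mul]
        congr 1
        exact intervalIntegral.integral_congr (fun x _ => heq x)
    _ = Real.sqrt 2 * (η * ‖φ a‖ * |Real.sin (k*a)|) / |lam - k^2| := by
        rw [hI]
        have hcast : ((lam:ℂ) - (k:ℂ)^2) = (((lam - k^2 : ℝ)) : ℂ) := by push_cast; ring
        rw [hcast, norm_mul, norm_div, norm_mul, norm_mul]
        simp only [Complex.norm_real, Real.norm_eq_abs]
        rw [abs_of_nonneg (Real.sqrt_nonneg 2), abs_of_nonneg hη]
        ring
    _ ≤ Real.sqrt 2 * (η * ‖φ a‖) / |(j : ℝ) ^ 2 * Real.pi ^ 2 - lam| := by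
        rw [← hk2, abs_sub_comm lam (k^2)]
        have hpos : 0 < |k^2 - lam| :=
          abs_pos.mpr (sub_ne_zero.mpr (by rw [hk2]; exact hne))
        have hsin : |Real.sin (k*a)| ≤ 1 := Real.abs_sin_le_one _
        refine div_le_div₀ (by positivity) ?_ hpos le_rfl
        nlinarith [mul_nonneg (mul_nonneg (Real.sqrt_nonneg 2) hη) (norm_nonneg (φ a)), hsin, abs_nonneg (Real.sin (k*a))]
end

section
/- Assume the eigenfunction setup with eigenvalue $\lambda$ and suppose additionally that $\int_0^1 |\varphi(x)|^2\,dx = 1$. Then $\eta\,|\varphi(a)|^2 \le \lambda - \pi^2$. -/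
open Real Set Filter Topology intervalIntegral

noncomputable def gg (x : ℝ) : ℝ := Real.pi * Real.cos (Real.pi * x) / Real.sin (Real.pi * x)

lemma sin_pi_pos' {x : ℝ} (h0 : 0 < x) (h1 : x < 1) : 0 < Real.sin (Real.pi * x) :=
  Real.sin_pos_of_pos_of_lt_pi (by positivity) (by nlinarith [Real.pi_pos])

lemma hasDerivAt_gg {x : ℝ} (hx : Real.sin (Real.pi * x) ≠ 0) :
    HasDerivAt gg (-(gg x ^ 2 + Real.pi ^ 2)) x := by
  have hid : HasDerivAt (fun y : ℝ => Real.pi * y) Real.pi x := by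
    simpa using (hasDerivAt_id x).const_mul Real.pi
  have hs : HasDerivAt (fun y => Real.sin (Real.pi * y)) (Real.cos (Real.pi * x) * Real.pi) x :=
    (Real.hasDerivAt_sin (Real.pi * x)).comp x hid
  have hc : HasDerivAt (fun y => Real.pi * Real.cos (Real.pi * y))
      (Real.pi * (-Real.sin (Real.pi * x) * Real.pi)) x :=
    (((Real.hasDerivAt_cos (Real.pi * x)).comp x hid)).const_mul Real.pi
  have h := hc.div hs hx
  convert (show HasDerivAt gg _ x from h) using 1
  have hpyth := Real.sin_sq_add_cos_sq (Real.pi * x)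
  simp only [gg]
  field_simp
  nlinarith [hpyth, sq_nonneg (Real.sin (Real.pi*x))]

lemma HasDerivAt.creal {f : ℝ → ℂ} {f' : ℂ} {x : ℝ} (h : HasDerivAt f f' x) :
    HasDerivAt (fun y => (f y).re) f'.re x := by
  exact (Complex.reCLM.hasFDerivAt.comp_hasDerivAt x h)

lemma HasDerivAt.cimag {f : ℝ → ℂ} {f' : ℂ} {x : ℝ} (h : HasDerivAt f f' x) :
    HasDerivAt (fun y => (f y).im) f'.im x := by
  exact (Complex.imCLM.hasFDerivAt.comp_hasDerivAt x h)

lemma norm_sq_eq_c (z : ℂ) : ‖z‖ ^ 2 = z.re ^ 2 + z.im ^ 2 := by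
  rw [Complex.sq_norm, Complex.normSq_apply]; ring



/-- for an `L²`-normalized eigenfunction with eigenvalue `λ`,
`η |φ(a)|² ≤ λ - π²`. -/
theorem stmt_6 (a η lam : ℝ) (φ d1 d2 e1 e2 : ℝ → ℂ)
    (hsetup : EigenfunctionSetup a η lam φ d1 d2 e1 e2)
    (hnorm : ∫ x in (0:ℝ)..1, ‖φ x‖ ^ 2 = 1) :
    η * ‖φ a‖ ^ 2 ≤ lam - Real.pi ^ 2 := by
  obtain ⟨ha, hη, hφc, hbc0, hbc1, hdL, hd2c, hdR, he2c, hodeL, hodeR, hjump⟩ := hsetup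
  have ha0 : (0:ℝ) < a := ha.1
  have ha1 : a < 1 := ha.2
  set nφ : ℝ → ℝ := fun x => (φ x).re ^ 2 + (φ x).im ^ 2 with hnφdef
  set nd : ℝ → ℝ := fun x => (d1 x).re ^ 2 + (d1 x).im ^ 2 with hnddef
  set ne' : ℝ → ℝ := fun x => (e1 x).re ^ 2 + (e1 x).im ^ 2 with hnedef
  -- continuity facts
  have cφre : ContinuousOn (fun x => (φ x).re) (Icc 0 1) :=
    Complex.continuous_re.comp_continuousOn hφc
  have cφim : ContinuousOn (fun x => (φ x).im) (Icc 0 1) :=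
    Complex.continuous_im.comp_continuousOn hφc
  have cnφ : ContinuousOn nφ (Icc 0 1) := ((cφre.pow 2).add (cφim.pow 2))
  have cd1 : ContinuousOn d1 (Icc 0 a) := fun x hx => ((hdL x hx).2).continuousWithinAt
  have ce1 : ContinuousOn e1 (Icc a 1) := fun x hx => ((hdR x hx).2).continuousWithinAt
  have cnd : ContinuousOn nd (Icc 0 a) :=
    (((Complex.continuous_re.comp_continuousOn cd1).pow 2).add
      ((Complex.continuous_im.comp_continuousOn cd1).pow 2))
  have cne : ContinuousOn ne' (Icc a 1) :=
    (((Complex.continuous_re.comp_continuousOn ce1).pow 2).add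
      ((Complex.continuous_im.comp_continuousOn ce1).pow 2))
  have hIccL : Icc (0:ℝ) a ⊆ Icc 0 1 := Icc_subset_Icc le_rfl ha1.le
  have hIccR : Icc a (1:ℝ) ⊆ Icc 0 1 := Icc_subset_Icc ha0.le le_rfl
  -- interior two-sided derivatives
  have hφL : ∀ x ∈ Ioo (0:ℝ) a, HasDerivAt φ (d1 x) x := fun x hx =>
    ((hdL x ⟨hx.1.le, hx.2.le⟩).1).hasDerivAt (Icc_mem_nhds hx.1 hx.2)
  have hd1L : ∀ x ∈ Ioo (0:ℝ) a, HasDerivAt d1 (d2 x) x := fun x hx =>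
    ((hdL x ⟨hx.1.le, hx.2.le⟩).2).hasDerivAt (Icc_mem_nhds hx.1 hx.2)
  have hφR : ∀ x ∈ Ioo a (1:ℝ), HasDerivAt φ (e1 x) x := fun x hx =>
    ((hdR x ⟨hx.1.le, hx.2.le⟩).1).hasDerivAt (Icc_mem_nhds hx.1 hx.2)
  have he1R : ∀ x ∈ Ioo a (1:ℝ), HasDerivAt e1 (e2 x) x := fun x hx =>
    ((hdR x ⟨hx.1.le, hx.2.le⟩).2).hasDerivAt (Icc_mem_nhds hx.1 hx.2)
  -- integrability
  have indL : IntervalIntegrable nd MeasureTheory.volume 0 a :=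
    cnd.intervalIntegrable_of_Icc ha0.le
  have ineR : IntervalIntegrable ne' MeasureTheory.volume a 1 :=
    cne.intervalIntegrable_of_Icc ha1.le
  have inφL : IntervalIntegrable nφ MeasureTheory.volume 0 a :=
    (cnφ.mono hIccL).intervalIntegrable_of_Icc ha0.le
  have inφR : IntervalIntegrable nφ MeasureTheory.volume a 1 :=
    (cnφ.mono hIccR).intervalIntegrable_of_Icc ha1.le
  set Ia := ∫ x in (0:ℝ)..a, nd x with hIa
  set Ib := ∫ x in a..(1:ℝ), ne' x with hIb
  set Pa := ∫ x in (0:ℝ)..a, nφ x with hPa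
  set Pb := ∫ x in a..(1:ℝ), nφ x with hPb
  -- normalization
  have hPab : Pa + Pb = 1 := by
    have hnφnorm : (∫ x in (0:ℝ)..1, nφ x) = ∫ x in (0:ℝ)..1, ‖φ x‖ ^ 2 :=
      intervalIntegral.integral_congr (fun x _ => (norm_sq_eq_c (φ x)).symm)
    rw [hPa, hPb, integral_add_adjacent_intervals inφL inφR, hnφnorm, hnorm]
  -- Energy identity left
  have energyL : Ia - lam * Pa = (φ a).re * (d1 a).re + (φ a).im * (d1 a).im := by
    have hftc : ∫ x in (0:ℝ)..a, (nd x - lam * nφ x)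
        = ((φ a).re * (d1 a).re + (φ a).im * (d1 a).im)
          - ((φ 0).re * (d1 0).re + (φ 0).im * (d1 0).im) := by
      apply integral_eq_sub_of_hasDeriv_right_of_le ha0.le
      · exact (((cφre.mono hIccL).mul (Complex.continuous_re.comp_continuousOn cd1)).add
          ((cφim.mono hIccL).mul (Complex.continuous_im.comp_continuousOn cd1)))
      · intro x hx
        have hφ := hφL x hx
        have hd := hd1L x hx
        have hode : d2 x = -((lam:ℂ) * φ x) := by
          have := hodeL x hx; linear_combination -this
        have h1 : HasDerivAt (fun y => (φ y).re * (d1 y).re + (φ y).im * (d1 y).im)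
            (((d1 x).re * (d1 x).re + (φ x).re * (d2 x).re)
              + ((d1 x).im * (d1 x).im + (φ x).im * (d2 x).im)) x :=
          (hφ.creal.mul hd.creal).add (hφ.cimag.mul hd.cimag)
        have hre : (d2 x).re = -(lam * (φ x).re) := by rw [hode]; simp
        have him : (d2 x).im = -(lam * (φ x).im) := by rw [hode]; simp
        have : ((d1 x).re * (d1 x).re + (φ x).re * (d2 x).re)
              + ((d1 x).im * (d1 x).im + (φ x).im * (d2 x).im)
            = nd x - lam * nφ x := by
          rw [hre, him]; simp only [hnddef, hnφdef]; ring
        rw [← this]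
        exact h1.hasDerivWithinAt
      · exact indL.sub (inφL.const_mul lam)
    have hsplit : ∫ x in (0:ℝ)..a, (nd x - lam * nφ x) = Ia - lam * Pa := by
      rw [intervalIntegral.integral_sub indL (inφL.const_mul lam),
        intervalIntegral.integral_const_mul]
    rw [← hsplit, hftc, hbc0]
    simp
  -- Energy identity right
  have energyR : Ib - lam * Pb = -((φ a).re * (e1 a).re + (φ a).im * (e1 a).im) := by
    have hftc : ∫ x in a..(1:ℝ), (ne' x - lam * nφ x)
        = (fun y => (φ y).re * (e1 y).re + (φ y).im * (e1 y).im) 1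
          - (fun y => (φ y).re * (e1 y).re + (φ y).im * (e1 y).im) a := by
      apply integral_eq_sub_of_hasDeriv_right_of_le
        (f := fun y => (φ y).re * (e1 y).re + (φ y).im * (e1 y).im)
        (f' := fun x => ne' x - lam * nφ x) ha1.le
      · exact (((cφre.mono hIccR).mul (Complex.continuous_re.comp_continuousOn ce1)).add
          ((cφim.mono hIccR).mul (Complex.continuous_im.comp_continuousOn ce1)))
      · intro x hx
        have hφ := hφR x hx
        have hd := he1R x hx
        have hode : e2 x = -((lam:ℂ) * φ x) := by
          have := hodeR x hx; linear_combination -this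
        have h1 : HasDerivAt (fun y => (φ y).re * (e1 y).re + (φ y).im * (e1 y).im)
            (((e1 x).re * (e1 x).re + (φ x).re * (e2 x).re)
              + ((e1 x).im * (e1 x).im + (φ x).im * (e2 x).im)) x :=
          (hφ.creal.mul hd.creal).add (hφ.cimag.mul hd.cimag)
        have hre : (e2 x).re = -(lam * (φ x).re) := by rw [hode]; simp
        have him : (e2 x).im = -(lam * (φ x).im) := by rw [hode]; simp
        have heq : ((e1 x).re * (e1 x).re + (φ x).re * (e2 x).re)
              + ((e1 x).im * (e1 x).im + (φ x).im * (e2 x).im)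
            = ne' x - lam * nφ x := by
          rw [hre, him]; simp only [hnedef, hnφdef]; ring
        rw [← heq]
        exact h1.hasDerivWithinAt
      · exact ineR.sub (inφR.const_mul lam)
    have hsplit : ∫ x in a..(1:ℝ), (ne' x - lam * nφ x) = Ib - lam * Pb := by
      rw [intervalIntegral.integral_sub ineR (inφR.const_mul lam),
        intervalIntegral.integral_const_mul]
    rw [← hsplit, hftc]
    simp [hbc1]
  -- jump condition in coordinates
  have hjre : (e1 a).re - (d1 a).re = η * (φ a).re := by
    have := congrArg Complex.re hjump; simpa using this
  have hjim : (e1 a).im - (d1 a).im = η * (φ a).im := by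
    have := congrArg Complex.im hjump; simpa using this
  have energy : Ia + Ib = lam - η * nφ a := by
    simp only [hnφdef]
    linear_combination energyL + energyR + lam * hPab - (φ a).re * hjre - (φ a).im * hjim
  -- Poincaré inequality on each piece
  have hsin01 : ∀ x ∈ Ioo (0:ℝ) 1, Real.sin (Real.pi * x) ≠ 0 := fun x hx =>
    (sin_pi_pos' hx.1 hx.2).ne'
  set F : ℝ → ℝ := fun x => nφ x * gg x with hFdef
  -- left piece key inequality
  have keyL : ∀ s ∈ Ioo (0:ℝ) a, F a - F s ≤ ∫ x in s..a, (nd x - Real.pi^2 * nφ x) := by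
    intro s hs
    have hsub01 : Icc s a ⊆ Ioo (0:ℝ) 1 := fun x hx =>
      ⟨hs.1.trans_le hx.1, hx.2.trans_lt ha1⟩
    have hsubL : Icc s a ⊆ Icc (0:ℝ) a := Icc_subset_Icc hs.1.le le_rfl
    have cgg : ContinuousOn gg (Icc s a) := fun x hx =>
      ((hasDerivAt_gg (hsin01 x (hsub01 hx))).continuousAt).continuousWithinAt
    set q : ℝ → ℝ := fun x =>
      ((d1 x).re - gg x * (φ x).re)^2 + ((d1 x).im - gg x * (φ x).im)^2 with hqdef
    have cq : ContinuousOn q (Icc s a) :=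
      ((((Complex.continuous_re.comp_continuousOn (cd1.mono hsubL)).sub
          (cgg.mul ((cφre.mono hIccL).mono hsubL))).pow 2).add
        (((Complex.continuous_im.comp_continuousOn (cd1.mono hsubL)).sub
          (cgg.mul ((cφim.mono hIccL).mono hsubL))).pow 2))
    have ih : IntervalIntegrable (fun x => nd x - Real.pi^2 * nφ x)
        MeasureTheory.volume s a :=
      ((cnd.mono hsubL).sub (continuousOn_const.mul ((cnφ.mono hIccL).mono hsubL))).intervalIntegrable_of_Icc hs.2.le
    have iq : IntervalIntegrable q MeasureTheory.volume s a :=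
      cq.intervalIntegrable_of_Icc hs.2.le
    have hftc : ∫ x in s..a, ((nd x - Real.pi^2 * nφ x) - q x) = F a - F s := by
      apply integral_eq_sub_of_hasDeriv_right_of_le hs.2.le
      · exact ((cnφ.mono hIccL).mono hsubL).mul cgg
      · intro x hx
        have hx' : x ∈ Ioo (0:ℝ) a := ⟨hs.1.trans hx.1, hx.2⟩
        have hφ := hφL x hx'
        have hgg := hasDerivAt_gg (hsin01 x ⟨hx'.1, hx'.2.trans ha1⟩)
        have hdF : HasDerivAt F
            ((((2:ℝ) * (φ x).re ^ 1 * (d1 x).re) + ((2:ℝ) * (φ x).im ^ 1 * (d1 x).im)) * gg x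
              + nφ x * (-(gg x ^ 2 + Real.pi ^ 2))) x :=
          ((hφ.creal.pow 2).add (hφ.cimag.pow 2)).mul hgg
        have heq : (((2:ℝ) * (φ x).re ^ 1 * (d1 x).re) + ((2:ℝ) * (φ x).im ^ 1 * (d1 x).im)) * gg x
              + nφ x * (-(gg x ^ 2 + Real.pi ^ 2))
            = (nd x - Real.pi^2 * nφ x) - q x := by
          simp only [hnddef, hnφdef, hqdef]; ring
        rw [← heq]
        exact hdF.hasDerivWithinAt
      · exact ih.sub iq
    have hqnn : 0 ≤ ∫ x in s..a, q x :=
      intervalIntegral.integral_nonneg hs.2.le (fun x _ => by positivity)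
    rw [intervalIntegral.integral_sub ih iq] at hftc
    linarith
  -- right piece key inequality
  have keyR : ∀ s ∈ Ioo a (1:ℝ), F s - F a ≤ ∫ x in a..s, (ne' x - Real.pi^2 * nφ x) := by
    intro s hs
    have hsub01 : Icc a s ⊆ Ioo (0:ℝ) 1 := fun x hx =>
      ⟨ha0.trans_le hx.1, hx.2.trans_lt hs.2⟩
    have hsubR : Icc a s ⊆ Icc a (1:ℝ) := Icc_subset_Icc le_rfl hs.2.le
    have cgg : ContinuousOn gg (Icc a s) := fun x hx =>
      ((hasDerivAt_gg (hsin01 x (hsub01 hx))).continuousAt).continuousWithinAt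
    set q : ℝ → ℝ := fun x =>
      ((e1 x).re - gg x * (φ x).re)^2 + ((e1 x).im - gg x * (φ x).im)^2 with hqdef
    have cq : ContinuousOn q (Icc a s) :=
      ((((Complex.continuous_re.comp_continuousOn (ce1.mono hsubR)).sub
          (cgg.mul ((cφre.mono hIccR).mono hsubR))).pow 2).add
        (((Complex.continuous_im.comp_continuousOn (ce1.mono hsubR)).sub
          (cgg.mul ((cφim.mono hIccR).mono hsubR))).pow 2))
    have ih : IntervalIntegrable (fun x => ne' x - Real.pi^2 * nφ x)
        MeasureTheory.volume a s :=
      ((cne.mono hsubR).sub (continuousOn_const.mul ((cnφ.mono hIccR).mono hsubR))).intervalIntegrable_of_Icc hs.1.le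
    have iq : IntervalIntegrable q MeasureTheory.volume a s :=
      cq.intervalIntegrable_of_Icc hs.1.le
    have hftc : ∫ x in a..s, ((ne' x - Real.pi^2 * nφ x) - q x) = F s - F a := by
      apply integral_eq_sub_of_hasDeriv_right_of_le hs.1.le
      · exact ((cnφ.mono hIccR).mono hsubR).mul cgg
      · intro x hx
        have hx' : x ∈ Ioo a (1:ℝ) := ⟨hx.1, hx.2.trans hs.2⟩
        have hφ := hφR x hx'
        have hgg := hasDerivAt_gg (hsin01 x ⟨ha0.trans hx'.1, hx'.2⟩)
        have hdF : HasDerivAt F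
            ((((2:ℝ) * (φ x).re ^ 1 * (e1 x).re) + ((2:ℝ) * (φ x).im ^ 1 * (e1 x).im)) * gg x
              + nφ x * (-(gg x ^ 2 + Real.pi ^ 2))) x :=
          ((hφ.creal.pow 2).add (hφ.cimag.pow 2)).mul hgg
        have heq : (((2:ℝ) * (φ x).re ^ 1 * (e1 x).re) + ((2:ℝ) * (φ x).im ^ 1 * (e1 x).im)) * gg x
              + nφ x * (-(gg x ^ 2 + Real.pi ^ 2))
            = (ne' x - Real.pi^2 * nφ x) - q x := by
          simp only [hnedef, hnφdef, hqdef]; ring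
        rw [← heq]
        exact hdF.hasDerivWithinAt
      · exact ih.sub iq
    have hqnn : 0 ≤ ∫ x in a..s, q x :=
      intervalIntegral.integral_nonneg hs.1.le (fun x _ => by positivity)
    rw [intervalIntegral.integral_sub ih iq] at hftc
    linarith
  -- boundary limit at 0
  have hFtend0 : Tendsto F (𝓝[>] (0:ℝ)) (𝓝 0) := by
    have h0 := (hdL 0 ⟨le_rfl, ha0.le⟩).1
    have hslope0 := hasDerivWithinAt_iff_tendsto_slope.mp h0
    have hle : 𝓝[>] (0:ℝ) ≤ 𝓝[Icc 0 a \ {0}] 0 := by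
      rw [← nhdsWithin_Ioo_eq_nhdsGT ha0]
      exact nhdsWithin_mono _ (fun x hx => ⟨⟨hx.1.le, hx.2.le⟩, hx.1.ne'⟩)
    have hslope : Tendsto (fun s => ‖slope φ 0 s‖) (𝓝[>] (0:ℝ)) (𝓝 ‖d1 0‖) :=
      (hslope0.mono_left hle).norm
    have hsinsl : Tendsto (fun s => Real.sin (Real.pi * s) / s) (𝓝[>] (0:ℝ))
        (𝓝 (Real.cos (Real.pi * 0) * Real.pi)) := by
      have hid : HasDerivAt (fun y : ℝ => Real.pi * y) Real.pi 0 := by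
        simpa using (hasDerivAt_id (0:ℝ)).const_mul Real.pi
      have h : HasDerivAt (fun y => Real.sin (Real.pi * y)) (Real.cos (Real.pi * 0) * Real.pi) 0 :=
        (Real.hasDerivAt_sin (Real.pi * 0)).comp 0 hid
      have := hasDerivAt_iff_tendsto_slope.mp h
      have hmono : 𝓝[>] (0:ℝ) ≤ 𝓝[≠] (0:ℝ) :=
        nhdsWithin_mono _ (fun x hx => ne_of_gt hx)
      have h2 := this.mono_left hmono
      refine h2.congr (fun s => ?_)
      rw [slope_def_field]
      simp
    have hquot : Tendsto (fun s => s / Real.sin (Real.pi * s)) (𝓝[>] (0:ℝ))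
        (𝓝 (Real.cos (Real.pi * 0) * Real.pi)⁻¹) := by
      have := hsinsl.inv₀ (by simp [Real.pi_ne_zero])
      refine this.congr (fun s => ?_)
      rw [inv_div]
    have hid0 : Tendsto (fun s : ℝ => s) (𝓝[>] (0:ℝ)) (𝓝 0) :=
      (continuous_id.tendsto 0).mono_left nhdsWithin_le_nhds
    have hcos : Tendsto (fun s : ℝ => Real.pi * Real.cos (Real.pi * s)) (𝓝[>] (0:ℝ))
        (𝓝 (Real.pi * Real.cos (Real.pi * 0))) :=
      ((continuous_const.mul (Real.continuous_cos.comp (continuous_const.mul continuous_id))).tendsto 0).mono_left nhdsWithin_le_nhds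
    have hgg2 : Tendsto (fun s => s^2 * gg s) (𝓝[>] (0:ℝ)) (𝓝 0) := by
      have heq : (fun s : ℝ => s^2 * gg s)
          = fun s => (s / Real.sin (Real.pi * s)) * (Real.pi * Real.cos (Real.pi * s)) * s := by
        funext s; simp only [gg]; ring
      rw [heq]
      have := (hquot.mul hcos).mul hid0
      simpa using this
    have heqF : F =ᶠ[𝓝[>] (0:ℝ)] fun s => ‖slope φ 0 s‖^2 * (s^2 * gg s) := by
      filter_upwards [Ioo_mem_nhdsGT_of_mem (⟨le_rfl, ha0⟩ : (0:ℝ) ∈ Ico (0:ℝ) a)] with s hs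
      have hs0 : (s:ℝ) ≠ 0 := hs.1.ne'
      have hsl : slope φ 0 s = (s:ℝ)⁻¹ • φ s := by
        rw [slope_def_module, hbc0, sub_zero, sub_zero]
      rw [hsl, norm_smul, norm_inv, Real.norm_eq_abs, abs_of_pos hs.1, mul_pow,
        norm_sq_eq_c (φ s)]
      simp only [hFdef, hnφdef]
      field_simp
    have := (hslope.pow 2).mul hgg2
    rw [mul_zero] at this
    exact Tendsto.congr' heqF.symm this
  -- boundary limit at 1
  have hFtend1 : Tendsto F (𝓝[<] (1:ℝ)) (𝓝 0) := by
    have h1 := (hdR 1 ⟨ha1.le, le_rfl⟩).1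
    have hslope1 := hasDerivWithinAt_iff_tendsto_slope.mp h1
    have hle : 𝓝[<] (1:ℝ) ≤ 𝓝[Icc a 1 \ {1}] 1 := by
      rw [← nhdsWithin_Ioo_eq_nhdsLT ha1]
      exact nhdsWithin_mono _ (fun x hx => ⟨⟨hx.1.le, hx.2.le⟩, hx.2.ne⟩)
    have hslope : Tendsto (fun s => ‖slope φ 1 s‖) (𝓝[<] (1:ℝ)) (𝓝 ‖e1 1‖) :=
      (hslope1.mono_left hle).norm
    have hsinsl : Tendsto (fun s => Real.sin (Real.pi * s) / (s - 1)) (𝓝[<] (1:ℝ))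
        (𝓝 (Real.cos (Real.pi * 1) * Real.pi)) := by
      have hid : HasDerivAt (fun y : ℝ => Real.pi * y) Real.pi 1 := by
        simpa using (hasDerivAt_id (1:ℝ)).const_mul Real.pi
      have h : HasDerivAt (fun y => Real.sin (Real.pi * y)) (Real.cos (Real.pi * 1) * Real.pi) 1 :=
        (Real.hasDerivAt_sin (Real.pi * 1)).comp 1 hid
      have := hasDerivAt_iff_tendsto_slope.mp h
      have hmono : 𝓝[<] (1:ℝ) ≤ 𝓝[≠] (1:ℝ) :=
        nhdsWithin_mono _ (fun x hx => ne_of_lt hx)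
      have h2 := this.mono_left hmono
      refine h2.congr (fun s => ?_)
      rw [slope_def_field]
      simp [Real.sin_pi]
    have hquot : Tendsto (fun s => (s - 1) / Real.sin (Real.pi * s)) (𝓝[<] (1:ℝ))
        (𝓝 (Real.cos (Real.pi * 1) * Real.pi)⁻¹) := by
      have hne : (Real.cos (Real.pi * 1) * Real.pi) ≠ 0 := by
        simp [Real.pi_ne_zero]
      have := hsinsl.inv₀ hne
      refine this.congr (fun s => ?_)
      rw [inv_div]
    have hid1 : Tendsto (fun s : ℝ => s - 1) (𝓝[<] (1:ℝ)) (𝓝 0) := by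
      have : Tendsto (fun s : ℝ => s - 1) (𝓝 (1:ℝ)) (𝓝 (1 - 1)) :=
        (continuous_id.sub continuous_const).tendsto 1
      simpa using this.mono_left nhdsWithin_le_nhds
    have hcos : Tendsto (fun s : ℝ => Real.pi * Real.cos (Real.pi * s)) (𝓝[<] (1:ℝ))
        (𝓝 (Real.pi * Real.cos (Real.pi * 1))) :=
      ((continuous_const.mul (Real.continuous_cos.comp (continuous_const.mul continuous_id))).tendsto 1).mono_left nhdsWithin_le_nhds
    have hgg2 : Tendsto (fun s => (s - 1)^2 * gg s) (𝓝[<] (1:ℝ)) (𝓝 0) := by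
      have heq : (fun s : ℝ => (s - 1)^2 * gg s)
          = fun s => ((s - 1) / Real.sin (Real.pi * s)) * (Real.pi * Real.cos (Real.pi * s)) * (s - 1) := by
        funext s; simp only [gg]; ring
      rw [heq]
      have := (hquot.mul hcos).mul hid1
      simpa using this
    have heqF : F =ᶠ[𝓝[<] (1:ℝ)] fun s => ‖slope φ 1 s‖^2 * ((s - 1)^2 * gg s) := by
      filter_upwards [Ioo_mem_nhdsLT_of_mem (⟨ha1, le_rfl⟩ : (1:ℝ) ∈ Ioc a 1)] with s hs
      have hs1 : s - 1 ≠ 0 := sub_ne_zero.mpr hs.2.ne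
      have hsl : slope φ 1 s = (s - 1)⁻¹ • φ s := by
        rw [slope_def_module, hbc1, sub_zero]
      rw [hsl, norm_smul, norm_inv, Real.norm_eq_abs, mul_pow, inv_pow, sq_abs,
        norm_sq_eq_c (φ s)]
      simp only [hFdef, hnφdef]
      field_simp [pow_ne_zero 2 hs1]
    have := (hslope.pow 2).mul hgg2
    rw [mul_zero] at this
    exact Tendsto.congr' heqF.symm this
  -- pass to the limit on the left
  have ihL : IntervalIntegrable (fun x => nd x - Real.pi^2 * nφ x) MeasureTheory.volume 0 a :=
    indL.sub (inφL.const_mul _)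
  have hFa_le : F a ≤ ∫ x in (0:ℝ)..a, (nd x - Real.pi^2 * nφ x) := by
    obtain ⟨M, hM⟩ := (isCompact_Icc : IsCompact (Icc (0:ℝ) a)).exists_bound_of_continuousOn
      (cnd.sub (continuousOn_const.mul (cnφ.mono hIccL)))
    have htend0 : Tendsto (fun s => ∫ x in (0:ℝ)..s, (nd x - Real.pi^2 * nφ x))
        (𝓝[>] (0:ℝ)) (𝓝 0) := by
      apply squeeze_zero_norm' (a := fun s => M * s)
      · filter_upwards [Ioo_mem_nhdsGT_of_mem (⟨le_rfl, ha0⟩ : (0:ℝ) ∈ Ico (0:ℝ) a)] with s hs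
        have hb : ∀ x ∈ Set.uIoc (0:ℝ) s, ‖nd x - Real.pi^2 * nφ x‖ ≤ M := by
          intro x hx
          rw [Set.uIoc_of_le hs.1.le] at hx
          exact hM x ⟨hx.1.le, hx.2.trans hs.2.le⟩
        calc ‖∫ x in (0:ℝ)..s, (nd x - Real.pi^2 * nφ x)‖
            ≤ M * |s - 0| := intervalIntegral.norm_integral_le_of_norm_le_const hb
          _ = M * s := by rw [sub_zero, abs_of_pos hs.1]
      · have : Tendsto (fun s : ℝ => M * s) (𝓝 (0:ℝ)) (𝓝 (M * 0)) :=
          (continuous_const.mul continuous_id).tendsto 0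
        simpa using this.mono_left nhdsWithin_le_nhds
    have htendI : Tendsto (fun s => ∫ x in s..a, (nd x - Real.pi^2 * nφ x))
        (𝓝[>] (0:ℝ)) (𝓝 (∫ x in (0:ℝ)..a, (nd x - Real.pi^2 * nφ x))) := by
      have hev : ∀ᶠ s in 𝓝[>] (0:ℝ), (∫ x in (0:ℝ)..a, (nd x - Real.pi^2 * nφ x))
          - ∫ x in (0:ℝ)..s, (nd x - Real.pi^2 * nφ x)
          = ∫ x in s..a, (nd x - Real.pi^2 * nφ x) := by
        filter_upwards [Ioo_mem_nhdsGT_of_mem (⟨le_rfl, ha0⟩ : (0:ℝ) ∈ Ico (0:ℝ) a)] with s hs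
        exact intervalIntegral.integral_interval_sub_left ihL
          (ihL.mono_set (by rw [Set.uIcc_of_le hs.1.le, Set.uIcc_of_le ha0.le]; exact Icc_subset_Icc le_rfl hs.2.le))
      have hc : Tendsto (fun _ : ℝ => ∫ x in (0:ℝ)..a, (nd x - Real.pi^2 * nφ x))
          (𝓝[>] (0:ℝ)) (𝓝 (∫ x in (0:ℝ)..a, (nd x - Real.pi^2 * nφ x))) := tendsto_const_nhds
      have h2 := hc.sub htend0
      rw [sub_zero] at h2
      exact h2.congr' hev
    have hFtendd : Tendsto (fun s => F a - F s) (𝓝[>] (0:ℝ)) (𝓝 (F a)) := by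
      have hc : Tendsto (fun _ : ℝ => F a) (𝓝[>] (0:ℝ)) (𝓝 (F a)) := tendsto_const_nhds
      have h2 := hc.sub hFtend0
      rwa [sub_zero] at h2
    apply le_of_tendsto_of_tendsto hFtendd htendI
    filter_upwards [Ioo_mem_nhdsGT_of_mem (⟨le_rfl, ha0⟩ : (0:ℝ) ∈ Ico (0:ℝ) a)] with s hs
    exact keyL s hs
  -- pass to the limit on the right
  have ihR : IntervalIntegrable (fun x => ne' x - Real.pi^2 * nφ x) MeasureTheory.volume a 1 :=
    ineR.sub (inφR.const_mul _)
  have hFb_le : -F a ≤ ∫ x in a..(1:ℝ), (ne' x - Real.pi^2 * nφ x) := by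
    obtain ⟨M, hM⟩ := (isCompact_Icc : IsCompact (Icc a (1:ℝ))).exists_bound_of_continuousOn
      (cne.sub (continuousOn_const.mul (cnφ.mono hIccR)))
    have htend1 : Tendsto (fun s => ∫ x in s..(1:ℝ), (ne' x - Real.pi^2 * nφ x))
        (𝓝[<] (1:ℝ)) (𝓝 0) := by
      apply squeeze_zero_norm' (a := fun s => M * (1 - s))
      · filter_upwards [Ioo_mem_nhdsLT_of_mem (⟨ha1, le_rfl⟩ : (1:ℝ) ∈ Ioc a 1)] with s hs
        have hb : ∀ x ∈ Set.uIoc s (1:ℝ), ‖ne' x - Real.pi^2 * nφ x‖ ≤ M := by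
          intro x hx
          rw [Set.uIoc_of_le hs.2.le] at hx
          exact hM x ⟨hs.1.le.trans hx.1.le, hx.2⟩
        calc ‖∫ x in s..(1:ℝ), (ne' x - Real.pi^2 * nφ x)‖
            ≤ M * |1 - s| := intervalIntegral.norm_integral_le_of_norm_le_const hb
          _ = M * (1 - s) := by rw [abs_of_pos (by linarith [hs.2] : (0:ℝ) < 1 - s)]
      · have : Tendsto (fun s : ℝ => M * (1 - s)) (𝓝 (1:ℝ)) (𝓝 (M * (1 - 1))) :=
          (continuous_const.mul (continuous_const.sub continuous_id)).tendsto 1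
        simpa using this.mono_left nhdsWithin_le_nhds
    have htendI : Tendsto (fun s => ∫ x in a..s, (ne' x - Real.pi^2 * nφ x))
        (𝓝[<] (1:ℝ)) (𝓝 (∫ x in a..(1:ℝ), (ne' x - Real.pi^2 * nφ x))) := by
      have hev : ∀ᶠ s in 𝓝[<] (1:ℝ), (∫ x in a..(1:ℝ), (ne' x - Real.pi^2 * nφ x))
          - ∫ x in s..(1:ℝ), (ne' x - Real.pi^2 * nφ x)
          = ∫ x in a..s, (ne' x - Real.pi^2 * nφ x) := by
        filter_upwards [Ioo_mem_nhdsLT_of_mem (⟨ha1, le_rfl⟩ : (1:ℝ) ∈ Ioc a 1)] with s hs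
        have h1 : IntervalIntegrable (fun x => ne' x - Real.pi^2 * nφ x) MeasureTheory.volume a s :=
          ihR.mono_set (by rw [Set.uIcc_of_le hs.1.le, Set.uIcc_of_le ha1.le]; exact Icc_subset_Icc le_rfl hs.2.le)
        have h2 : IntervalIntegrable (fun x => ne' x - Real.pi^2 * nφ x) MeasureTheory.volume s 1 :=
          ihR.mono_set (by rw [Set.uIcc_of_le hs.2.le, Set.uIcc_of_le ha1.le]; exact Icc_subset_Icc hs.1.le le_rfl)
        have hadd := intervalIntegral.integral_add_adjacent_intervals h1 h2
        linarith
      have hc : Tendsto (fun _ : ℝ => ∫ x in a..(1:ℝ), (ne' x - Real.pi^2 * nφ x))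
          (𝓝[<] (1:ℝ)) (𝓝 (∫ x in a..(1:ℝ), (ne' x - Real.pi^2 * nφ x))) := tendsto_const_nhds
      have h2 := hc.sub htend1
      rw [sub_zero] at h2
      exact h2.congr' hev
    have hFtendd : Tendsto (fun s => F s - F a) (𝓝[<] (1:ℝ)) (𝓝 (-F a)) := by
      have hc : Tendsto (fun _ : ℝ => F a) (𝓝[<] (1:ℝ)) (𝓝 (F a)) := tendsto_const_nhds
      have h2 := hFtend1.sub hc
      rwa [zero_sub] at h2
    apply le_of_tendsto_of_tendsto hFtendd htendI
    filter_upwards [Ioo_mem_nhdsLT_of_mem (⟨ha1, le_rfl⟩ : (1:ℝ) ∈ Ioc a 1)] with s hs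
    exact keyR s hs
  -- conclude
  have hsplitL : ∫ x in (0:ℝ)..a, (nd x - Real.pi^2 * nφ x) = Ia - Real.pi^2 * Pa := by
    rw [intervalIntegral.integral_sub indL (inφL.const_mul _),
      intervalIntegral.integral_const_mul]
  have hsplitR : ∫ x in a..(1:ℝ), (ne' x - Real.pi^2 * nφ x) = Ib - Real.pi^2 * Pb := by
    rw [intervalIntegral.integral_sub ineR (inφR.const_mul _),
      intervalIntegral.integral_const_mul]
  rw [hsplitL] at hFa_le
  rw [hsplitR] at hFb_le
  have hnφa : ‖φ a‖ ^ 2 = nφ a := norm_sq_eq_c (φ a)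
  rw [hnφa]
  have hPtot : Real.pi^2 * Pa + Real.pi^2 * Pb = Real.pi^2 := by
    rw [← mul_add, hPab, mul_one]
  linarith [hFa_le, hFb_le, energy, hPtot]
end
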